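/- Let (γ_n) be monotone increasing with constant differences, i.e. γ_{n+1}−γ_n ≡ C > 0 for all n ≥ 0, and γ_0 = 0. If F ∈ X_γ has finitely many zeros α_1,…,α_m in D with Blaschke decomposition F = B·G, then the identity ‖G‖_{X_γ}^2 = ‖F‖_{X_γ}^2 − Σ_{j=1}^m (1−|α_j|^2)·‖G(e^{i·})/(1−ᾱ_j e^{i·})‖_{Y_γ}^2 holds. -/

import Mathlib

open Finset

noncomputable def xnorm2 (γ : ℕ → ℝ) (a : ℕ → ℂ) : ℝ := ∑' n, γ n * ‖a n‖ ^ 2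

noncomputable def ynorm2 (γ : ℕ → ℝ) (a : ℕ → ℂ) : ℝ :=
  ∑' n, (γ (n + 1) - γ n) * ‖a n‖ ^ 2

def IsCoeffs (a : ℕ → ℂ) (F : ℂ → ℂ) : Prop :=
  ∀ z : ℂ, ‖z‖ < 1 → HasSum (fun n => a n * z ^ n) (F z)

/-!
Peel off one Blaschke factor `b(z) = (z - β) / (1 - β̄ z)` at a time. If `F = b Q` and `Λ` are
the Taylor coefficients of `Q(z) / (1 - β̄ z)`, then `F` and `Q` have coefficients
`Λ_{n-1} - β Λ_n` and `Λ_n - β̄ Λ_{n-1}`, and summing the identity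
`|x - β y|² - |y - β̄ x|² = (1 - |β|²)(|x|² - |y|²)` against a weight `w` gives
`‖Q‖²_w = ‖F‖²_w - (1 - |β|²) Σ (w_{n+1} - w_n) |Λ_n|²`. For `w ≡ 1` this says that
multiplication by a Blaschke product is an isometry of `H²`; for `w_{n+1} - w_n ≡ C` the
correction is `C (1 - |β|²) ‖Λ‖²_{H²}`, and that isometry identifies `‖Λ‖_{H²}` with
`‖G / (1 - β̄ z)‖_{H²}`. All these series converge because `F(β) = 0` makes
`Λ_n = Σ_j β^j p_{n+1+j}` a geometric average of the tail of the coefficients `p` of `F`.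
-/
open Filter Topology Metric
open scoped ComplexConjugate Nat

def shiftCoeffs (a : ℕ → ℂ) : ℕ → ℂ
  | 0 => 0
  | n + 1 => a n

noncomputable def taylorCoeff (A : ℂ → ℂ) (n : ℕ) : ℂ := (n ! : ℂ)⁻¹ * iteratedDeriv n A 0

noncomputable def blaschke (β z : ℂ) : ℂ := (z - β) / (1 - conj β * z)

namespace IsCoeffs

variable {a b : ℕ → ℂ} {A B : ℂ → ℂ}

theorem congr (h : IsCoeffs a A) (hAB : ∀ z : ℂ, ‖z‖ < 1 → A z = B z) : IsCoeffs a B :=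
  fun z hz => hAB z hz ▸ h z hz

theorem shift (h : IsCoeffs a A) : IsCoeffs (shiftCoeffs a) (fun z => z * A z) := by
  intro z hz
  rw [← hasSum_nat_add_iff' 1]
  simpa [shiftCoeffs, pow_succ, mul_left_comm, mul_comm] using (h z hz).mul_left z

theorem hasFPowerSeriesOnBall (h : IsCoeffs a A) :
    HasFPowerSeriesOnBall A (FormalMultilinearSeries.ofScalars ℂ a) 0 1 where
  r_le := by
    refine ENNReal.le_of_forall_nnreal_lt fun r hr => ?_
    have hr1 : ‖((r : ℝ) : ℂ)‖ < 1 := by simpa using hr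
    obtain ⟨C, hC⟩ := (h _ hr1).summable.tendsto_atTop_zero.norm.bddAbove_range
    refine FormalMultilinearSeries.le_radius_of_bound _ C fun n => ?_
    simpa [FormalMultilinearSeries.ofScalars_norm] using hC ⟨n, rfl⟩
  r_pos := zero_lt_one
  hasSum {y} hy := by
    rw [← ENNReal.coe_one, eball_coe, NNReal.coe_one, mem_ball_zero_iff] at hy
    simpa [FormalMultilinearSeries.ofScalars_apply_eq, mul_comm] using h y hy

theorem differentiableOn (h : IsCoeffs a A) : DifferentiableOn ℂ A (ball 0 1) := by
  simpa [← ENNReal.coe_one, eball_coe] using h.hasFPowerSeriesOnBall.differentiableOn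

theorem unique (ha : IsCoeffs a A) (hb : IsCoeffs b A) : a = b :=
  FormalMultilinearSeries.ofScalars_series_injective ℂ ℂ <|
    ha.hasFPowerSeriesOnBall.hasFPowerSeriesAt.eq_formalMultilinearSeries
      hb.hasFPowerSeriesOnBall.hasFPowerSeriesAt

end IsCoeffs

theorem isCoeffs_taylorCoeff {A : ℂ → ℂ} (hA : DifferentiableOn ℂ A (ball 0 1)) :
    IsCoeffs (taylorCoeff A) A := fun z hz => by
  simpa [taylorCoeff, mul_comm, mul_left_comm] using
    Complex.hasSum_taylorSeries_on_ball hA (mem_ball_zero_iff.2 hz)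

theorem IsCoeffs.eq_taylorCoeff {a : ℕ → ℂ} {A : ℂ → ℂ} (h : IsCoeffs a A) :
    a = taylorCoeff A :=
  h.unique (isCoeffs_taylorCoeff h.differentiableOn)

theorem one_sub_conj_mul_ne_zero {β z : ℂ} (hβ : ‖β‖ < 1) (hz : ‖z‖ < 1) :
    1 - conj β * z ≠ 0 := by
  intro h
  have : ‖β‖ * ‖z‖ = 1 := by
    rw [← Complex.norm_conj β, ← norm_mul, ← sub_eq_zero.1 h, norm_one]
  nlinarith [norm_nonneg β, norm_nonneg z]

theorem DifferentiableOn.div_one_sub_conj_mul {β : ℂ} (hβ : ‖β‖ < 1) {A : ℂ → ℂ}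
    (hA : DifferentiableOn ℂ A (ball 0 1)) :
    DifferentiableOn ℂ (fun z => A z / (1 - conj β * z)) (ball 0 1) :=
  hA.div (by fun_prop) fun z hz => one_sub_conj_mul_ne_zero hβ (mem_ball_zero_iff.1 hz)

theorem differentiableOn_prod_blaschke {ι : Type*} (s : Finset ι) {α : ι → ℂ}
    (hα : ∀ j ∈ s, ‖α j‖ < 1) :
    DifferentiableOn ℂ (fun z => ∏ j ∈ s, blaschke (α j) z) (ball 0 1) :=
  DifferentiableOn.fun_finsetProd fun j hj =>
    (differentiableOn_id.sub_const (α j)).div_one_sub_conj_mul (hα j hj)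

section Coefficients

variable {β : ℂ} {Λ : ℕ → ℂ} {Q : ℂ → ℂ}

theorem IsCoeffs.blaschke_mul (hΛ : IsCoeffs Λ fun z => Q z / (1 - conj β * z)) :
    IsCoeffs (fun n => shiftCoeffs Λ n - β * Λ n) fun z => blaschke β z * Q z := by
  intro z hz
  have h := (hΛ.shift z hz).sub ((hΛ z hz).mul_left β)
  rw [show z * (Q z / (1 - conj β * z)) - β * (Q z / (1 - conj β * z)) = blaschke β z * Q z by
    unfold blaschke; ring] at h
  simpa only [sub_mul, mul_assoc] using h

theorem IsCoeffs.mul_one_sub_conj_mul (hβ : ‖β‖ < 1)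
    (hΛ : IsCoeffs Λ fun z => Q z / (1 - conj β * z)) :
    IsCoeffs (fun n => Λ n - conj β * shiftCoeffs Λ n) Q := by
  intro z hz
  have h := (hΛ z hz).sub ((hΛ.shift z hz).mul_left (conj β))
  rw [show Q z / (1 - conj β * z) - conj β * (z * (Q z / (1 - conj β * z))) = Q z by
    have := one_sub_conj_mul_ne_zero hβ hz
    field_simp] at h
  simpa only [sub_mul, mul_assoc] using h

theorem tendsto_sum_geometric_tail (hβ : ‖β‖ < 1) {L : ℂ → ℂ} (hΛ : IsCoeffs Λ L)
    {p : ℕ → ℂ} (hp : ∀ n, p (n + 1) = Λ n - β * Λ (n + 1)) (n : ℕ) :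
    Tendsto (fun J => ∑ j ∈ range J, β ^ j * p (n + 1 + j)) atTop (𝓝 (Λ n)) := by
  have hpartial :
      ∀ J, ∑ j ∈ range J, β ^ j * p (n + 1 + j) = Λ n - β ^ J * Λ (n + J) := by
    intro J
    induction J with
    | zero => simp
    | succ J ih =>
      rw [sum_range_succ, ih, show n + 1 + J = n + J + 1 by omega, hp, ← add_assoc]
      ring
  -- `β ^ J * Λ (n + J) → 0` because `Λ k * ρ ^ k → 0` for some `‖β‖ < ρ < 1`.
  obtain ⟨ρ, hβρ, hρ⟩ := exists_between hβ
  have hρ0 : (ρ : ℂ) ≠ 0 := by exact_mod_cast ((norm_nonneg β).trans_lt hβρ).ne'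
  have hΛρ : Tendsto (fun J => Λ (J + n) * (ρ : ℂ) ^ (J + n)) atTop (𝓝 0) :=
    ((hΛ ρ (by simpa [abs_of_pos ((norm_nonneg β).trans_lt hβρ)] using hρ)).summable
      |>.tendsto_atTop_zero).comp (tendsto_add_atTop_nat n)
  have hβρ' : Tendsto (fun J => (β / ρ) ^ J) atTop (𝓝 0) :=
    tendsto_pow_atTop_nhds_zero_of_norm_lt_one <| by
      rwa [norm_div, Complex.norm_real, Real.norm_of_nonneg ((norm_nonneg β).trans hβρ.le),
        div_lt_one ((norm_nonneg β).trans_lt hβρ)]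
  have hrem : Tendsto (fun J => β ^ J * Λ (n + J)) atTop (𝓝 0) := by
    convert (hβρ'.mul hΛρ).const_mul ((ρ : ℂ) ^ n)⁻¹ using 1
    · ext J
      rw [add_comm J n, div_pow, pow_add]
      field_simp
    · simp
  simpa [hpartial] using tendsto_const_nhds.sub hrem

end Coefficients

theorem sq_sum_geometric_mul_le {r : ℝ} (hr0 : 0 ≤ r) (hr1 : r < 1) (a : ℕ → ℝ) (J : ℕ) :
    (∑ j ∈ range J, r ^ j * a j) ^ 2 ≤ (1 - r)⁻¹ * ∑ j ∈ range J, r ^ j * a j ^ 2 := by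
  have hgeom : ∑ j ∈ range J, r ^ j ≤ (1 - r)⁻¹ := by
    rw [← tsum_geometric_of_lt_one hr0 hr1]
    exact (summable_geometric_of_lt_one hr0 hr1).sum_le_tsum _ fun j _ => pow_nonneg hr0 j
  calc (∑ j ∈ range J, r ^ j * a j) ^ 2
      ≤ (∑ j ∈ range J, r ^ j) * ∑ j ∈ range J, r ^ j * a j ^ 2 :=
        sum_sq_le_sum_mul_sum_of_sq_le_mul _ (fun j _ => pow_nonneg hr0 j)
          (fun j _ => mul_nonneg (pow_nonneg hr0 j) (sq_nonneg _)) fun j _ => le_of_eq (by ring)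
    _ ≤ (1 - r)⁻¹ * ∑ j ∈ range J, r ^ j * a j ^ 2 :=
        mul_le_mul_of_nonneg_right hgeom
          (sum_nonneg fun j _ => mul_nonneg (pow_nonneg hr0 j) (sq_nonneg _))

theorem summable_tsum_geometric_mul_tail {r : ℝ} (hr0 : 0 ≤ r) (hr1 : r < 1) {s : ℕ → ℝ}
    (hs0 : ∀ n, 0 ≤ s n) (hs : Summable s) :
    Summable fun n => ∑' j, r ^ j * s (n + 1 + j) := by
  set F : ℕ × ℕ → ℝ := fun x => r ^ x.1 * s (x.2 + 1 + x.1)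
  have hF0 : 0 ≤ F := fun x => mul_nonneg (pow_nonneg hr0 _) (hs0 _)
  have htail : ∀ j, Summable fun n => s (n + 1 + j) := fun j => by
    simpa only [add_assoc] using (summable_nat_add_iff (1 + j)).2 hs
  have hF : Summable F := by
    refine (summable_prod_of_nonneg hF0).2 ⟨fun j => (htail j).mul_left (r ^ j), ?_⟩
    refine Summable.of_nonneg_of_le (fun j => tsum_nonneg fun n => hF0 (j, n)) (fun j => ?_)
      ((summable_geometric_of_lt_one hr0 hr1).mul_right (∑' n, s n))
    simp only [F, tsum_mul_left]
    refine mul_le_mul_of_nonneg_left ?_ (pow_nonneg hr0 j)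
    exact tsum_comp_le_tsum_of_inj hs hs0 fun a b h => by simpa using h
  exact ((summable_prod_of_nonneg (f := fun x => F x.swap) fun x => hF0 x.swap).1
    hF.prod_symm).2

theorem summable_weight_succ_mul_sq_of_tendsto {w : ℕ → ℝ} (hw : Monotone w) (hw0 : 0 ≤ w 0)
    {β : ℂ} (hβ : ‖β‖ < 1) {p Λ : ℕ → ℂ}
    (hΛ : ∀ n, Tendsto (fun J => ∑ j ∈ range J, β ^ j * p (n + 1 + j)) atTop (𝓝 (Λ n)))
    (hp : Summable fun n => w n * ‖p n‖ ^ 2) :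
    Summable fun n => w (n + 1) * ‖Λ n‖ ^ 2 := by
  set r := ‖β‖
  have hr0 : 0 ≤ r := norm_nonneg β
  have hwnn : ∀ n, 0 ≤ w n := fun n => hw0.trans (hw n.zero_le)
  have hs0 : ∀ n, 0 ≤ w n * ‖p n‖ ^ 2 := fun n => mul_nonneg (hwnn n) (sq_nonneg _)
  have hbound : ∀ n, w (n + 1) * ‖Λ n‖ ^ 2
      ≤ (1 - r)⁻¹ * ∑' j, r ^ j * (w (n + 1 + j) * ‖p (n + 1 + j)‖ ^ 2) := by
    intro n
    have hsum : Summable fun j => r ^ j * (w (n + 1 + j) * ‖p (n + 1 + j)‖ ^ 2) := by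
      refine Summable.of_nonneg_of_le (fun j => mul_nonneg (pow_nonneg hr0 j) (hs0 _))
        (fun j => mul_le_of_le_one_left (hs0 _) (pow_le_one₀ hr0 hβ.le)) ?_
      exact ((summable_nat_add_iff (n + 1)).2 hp).congr fun j => by rw [add_comm j]
    have : 0 ≤ (1 - r)⁻¹ := inv_nonneg.2 (sub_nonneg.2 hβ.le)
    refine le_of_tendsto (((hΛ n).norm.pow 2).const_mul (w (n + 1)))
      (Eventually.of_forall fun J => ?_)
    calc w (n + 1) * ‖∑ j ∈ range J, β ^ j * p (n + 1 + j)‖ ^ 2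
        ≤ w (n + 1) * (∑ j ∈ range J, r ^ j * ‖p (n + 1 + j)‖) ^ 2 := by
          refine mul_le_mul_of_nonneg_left ?_ (hwnn _)
          gcongr
          refine (norm_sum_le _ _).trans_eq ?_
          simp only [norm_mul, norm_pow, r]
      _ ≤ w (n + 1) * ((1 - r)⁻¹ * ∑ j ∈ range J, r ^ j * ‖p (n + 1 + j)‖ ^ 2) :=
          mul_le_mul_of_nonneg_left (sq_sum_geometric_mul_le hr0 hβ _ J) (hwnn _)
      _ = (1 - r)⁻¹ * ∑ j ∈ range J, r ^ j * (w (n + 1) * ‖p (n + 1 + j)‖ ^ 2) := by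
          rw [mul_sum, mul_sum, mul_sum]
          exact sum_congr rfl fun j _ => by ring
      _ ≤ (1 - r)⁻¹ * ∑ j ∈ range J, r ^ j * (w (n + 1 + j) * ‖p (n + 1 + j)‖ ^ 2) := by
          gcongr with j
          exact hw (by omega)
      _ ≤ (1 - r)⁻¹ * ∑' j, r ^ j * (w (n + 1 + j) * ‖p (n + 1 + j)‖ ^ 2) := by
          gcongr
          exact hsum.sum_le_tsum _ fun j _ => mul_nonneg (pow_nonneg hr0 j) (hs0 _)
  exact Summable.of_nonneg_of_le (fun n => mul_nonneg (hwnn _) (sq_nonneg _)) hbound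
    ((summable_tsum_geometric_mul_tail hr0 hβ hs0 hp).mul_left _)

theorem sq_norm_sub_mul_sub_sq_norm_sub_conj_mul (α x y : ℂ) :
    ‖x - α * y‖ ^ 2 - ‖y - conj α * x‖ ^ 2 = (1 - ‖α‖ ^ 2) * (‖x‖ ^ 2 - ‖y‖ ^ 2) := by
  simp only [Complex.sq_norm, Complex.normSq_apply, Complex.sub_re, Complex.sub_im,
    Complex.mul_re, Complex.mul_im, Complex.conj_re, Complex.conj_im]
  ring

theorem hasSum_weight_mul_sq_sub_conj_mul_shiftCoeffs {w : ℕ → ℝ} {β : ℂ} {Λ : ℕ → ℂ}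
    (hΛ : Summable fun n => w n * ‖Λ n‖ ^ 2) (hΛ' : Summable fun n => w (n + 1) * ‖Λ n‖ ^ 2)
    (hp : Summable fun n => w n * ‖shiftCoeffs Λ n - β * Λ n‖ ^ 2) :
    HasSum (fun n => w n * ‖Λ n - conj β * shiftCoeffs Λ n‖ ^ 2)
      (xnorm2 w (fun n => shiftCoeffs Λ n - β * Λ n) - (1 - ‖β‖ ^ 2) * ynorm2 w Λ) := by
  have hshift :
      HasSum (fun n => w n * ‖shiftCoeffs Λ n‖ ^ 2) (∑' n, w (n + 1) * ‖Λ n‖ ^ 2) := by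
    rw [← hasSum_nat_add_iff' 1]
    simpa [shiftCoeffs] using hΛ'.hasSum
  have hy : ynorm2 w Λ = ∑' n, w (n + 1) * ‖Λ n‖ ^ 2 - ∑' n, w n * ‖Λ n‖ ^ 2 := by
    rw [ynorm2, ← hΛ'.tsum_sub hΛ]
    exact tsum_congr fun n => sub_mul _ _ _
  rw [hy]
  refine (hp.hasSum.sub ((hshift.sub hΛ.hasSum).mul_left (1 - ‖β‖ ^ 2))).congr_fun fun n => ?_
  linear_combination -w n * sq_norm_sub_mul_sub_sq_norm_sub_conj_mul β (shiftCoeffs Λ n) (Λ n)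

section OneFactor

variable {β : ℂ} (hβ : ‖β‖ < 1) {Q : ℂ → ℂ} (hQ : DifferentiableOn ℂ Q (ball 0 1))
include hβ hQ

theorem xnorm2_taylorCoeff_of_blaschke_mul {w : ℕ → ℝ} (hw : Monotone w) (hw0 : 0 ≤ w 0)
    (hp : Summable fun n => w n * ‖taylorCoeff (fun z => blaschke β z * Q z) n‖ ^ 2) :
    (Summable fun n => w (n + 1) * ‖taylorCoeff (fun z => Q z / (1 - conj β * z)) n‖ ^ 2) ∧
    (Summable fun n => w n * ‖taylorCoeff Q n‖ ^ 2) ∧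
    xnorm2 w (taylorCoeff Q) = xnorm2 w (taylorCoeff fun z => blaschke β z * Q z)
      - (1 - ‖β‖ ^ 2) * ynorm2 w (taylorCoeff fun z => Q z / (1 - conj β * z)) := by
  set Λ := taylorCoeff fun z => Q z / (1 - conj β * z)
  have hΛ : IsCoeffs Λ fun z => Q z / (1 - conj β * z) :=
    isCoeffs_taylorCoeff (hQ.div_one_sub_conj_mul hβ)
  rw [← hΛ.blaschke_mul.eq_taylorCoeff] at hp ⊢
  rw [← (hΛ.mul_one_sub_conj_mul hβ).eq_taylorCoeff]
  have hΛ' : Summable fun n => w (n + 1) * ‖Λ n‖ ^ 2 :=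
    summable_weight_succ_mul_sq_of_tendsto hw hw0 hβ
      (tendsto_sum_geometric_tail hβ hΛ fun n => rfl) hp
  have hΛw : Summable fun n => w n * ‖Λ n‖ ^ 2 :=
    hΛ'.of_nonneg_of_le (fun n => mul_nonneg (hw0.trans (hw n.zero_le)) (sq_nonneg _))
      fun n => mul_le_mul_of_nonneg_right (hw n.le_succ) (sq_nonneg _)
  have h := hasSum_weight_mul_sq_sub_conj_mul_shiftCoeffs hΛw hΛ' hp
  exact ⟨hΛ', h.summable, h.tsum_eq⟩

theorem tsum_sq_taylorCoeff_of_blaschke_mul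
    (hp : Summable fun n => ‖taylorCoeff (fun z => blaschke β z * Q z) n‖ ^ 2) :
    (Summable fun n => ‖taylorCoeff (fun z => Q z / (1 - conj β * z)) n‖ ^ 2) ∧
    (Summable fun n => ‖taylorCoeff Q n‖ ^ 2) ∧
    ∑' n, ‖taylorCoeff Q n‖ ^ 2
      = ∑' n, ‖taylorCoeff (fun z => blaschke β z * Q z) n‖ ^ 2 := by
  simpa [xnorm2, ynorm2] using xnorm2_taylorCoeff_of_blaschke_mul hβ hQ (w := fun _ => 1)
    monotone_const zero_le_one (by simpa using hp)

end OneFactor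

theorem prod_blaschke_insert_mul {ι : Type*} [DecidableEq ι] {a : ι} {s : Finset ι}
    (ha : a ∉ s) (α : ι → ℂ) (W : ℂ → ℂ) :
    (fun z => (∏ j ∈ insert a s, blaschke (α j) z) * W z)
      = fun z => blaschke (α a) z * ((∏ j ∈ s, blaschke (α j) z) * W z) := by
  funext z
  rw [prod_insert ha, mul_assoc]

theorem tsum_sq_taylorCoeff_of_prod_blaschke_mul {ι : Type*} (s : Finset ι) {α : ι → ℂ}
    (hα : ∀ j ∈ s, ‖α j‖ < 1) {W : ℂ → ℂ} (hW : DifferentiableOn ℂ W (ball 0 1))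
    (hu : Summable fun n =>
      ‖taylorCoeff (fun z => (∏ j ∈ s, blaschke (α j) z) * W z) n‖ ^ 2) :
    (Summable fun n => ‖taylorCoeff W n‖ ^ 2) ∧
    ∑' n, ‖taylorCoeff W n‖ ^ 2
      = ∑' n, ‖taylorCoeff (fun z => (∏ j ∈ s, blaschke (α j) z) * W z) n‖ ^ 2 := by
  classical
  induction s using Finset.induction_on with
  | empty => simpa using hu
  | insert a s ha ih =>
    have hαs : ∀ j ∈ s, ‖α j‖ < 1 := fun j hj => hα j (mem_insert_of_mem hj)
    rw [prod_blaschke_insert_mul ha] at hu ⊢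
    obtain ⟨-, hq, hq_eq⟩ := tsum_sq_taylorCoeff_of_blaschke_mul (hα a (mem_insert_self a s))
      ((differentiableOn_prod_blaschke s hαs).mul hW) hu
    obtain ⟨hv, hv_eq⟩ := ih hαs hq
    exact ⟨hv, hv_eq.trans hq_eq⟩

theorem xnorm2_taylorCoeff_of_prod_blaschke_mul {ι : Type*} (s : Finset ι) {α : ι → ℂ}
    (hα : ∀ j ∈ s, ‖α j‖ < 1) {W : ℂ → ℂ} (hW : DifferentiableOn ℂ W (ball 0 1))
    {w : ℕ → ℝ} {c : ℝ} (hw : Monotone w) (hw0 : 0 ≤ w 0) (hc : ∀ n, w (n + 1) - w n = c)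
    (hu : Summable fun n => ‖taylorCoeff (fun z => (∏ j ∈ s, blaschke (α j) z) * W z) n‖ ^ 2)
    (huw : Summable fun n =>
      w n * ‖taylorCoeff (fun z => (∏ j ∈ s, blaschke (α j) z) * W z) n‖ ^ 2) :
    (∀ j ∈ s, Summable fun n => ‖taylorCoeff (fun z => W z / (1 - conj (α j) * z)) n‖ ^ 2) ∧
    (Summable fun n => w n * ‖taylorCoeff W n‖ ^ 2) ∧
    xnorm2 w (taylorCoeff W)
      = xnorm2 w (taylorCoeff fun z => (∏ j ∈ s, blaschke (α j) z) * W z)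
        - ∑ j ∈ s,
            (1 - ‖α j‖ ^ 2) * ynorm2 w (taylorCoeff fun z => W z / (1 - conj (α j) * z)) := by
  classical
  induction s using Finset.induction_on with
  | empty => simpa using huw
  | insert a s ha ih =>
    have hαa := hα a (mem_insert_self a s)
    have hαs : ∀ j ∈ s, ‖α j‖ < 1 := fun j hj => hα j (mem_insert_of_mem hj)
    have hQ : DifferentiableOn ℂ (fun z => (∏ j ∈ s, blaschke (α j) z) * W z) (ball 0 1) :=
      (differentiableOn_prod_blaschke s hαs).mul hW
    rw [prod_blaschke_insert_mul ha] at hu huw ⊢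
    obtain ⟨hΛ, hq, -⟩ := tsum_sq_taylorCoeff_of_blaschke_mul hαa hQ hu
    obtain ⟨-, hqw, hqw_eq⟩ := xnorm2_taylorCoeff_of_blaschke_mul hαa hQ hw hw0 huw
    obtain ⟨hK, hvw, hv_eq⟩ := ih hαs hq hqw
    have hdiv : (fun z => (∏ j ∈ s, blaschke (α j) z) * W z / (1 - conj (α a) * z))
        = fun z => (∏ j ∈ s, blaschke (α j) z) * (W z / (1 - conj (α a) * z)) :=
      funext fun z => mul_div_assoc _ _ _
    rw [hdiv] at hΛ hqw_eq
    obtain ⟨hKa, hKa_eq⟩ :=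
      tsum_sq_taylorCoeff_of_prod_blaschke_mul s hαs (hW.div_one_sub_conj_mul hαa) hΛ
    have hy : ∀ a : ℕ → ℂ, ynorm2 w a = c * ∑' n, ‖a n‖ ^ 2 := fun a => by
      simp only [ynorm2, hc, tsum_mul_left]
    refine ⟨fun j hj => ?_, hvw, ?_⟩
    · rcases mem_insert.1 hj with rfl | hj
      exacts [hKa, hK j hj]
    · rw [hv_eq, hqw_eq, sum_insert ha, hy, hy, ← hKa_eq]
      ring

theorem stmt5_general (γ : ℕ → ℝ) (hmono : Monotone γ) (h0 : γ 0 = 0)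
    (C : ℝ) (hdiff : ∀ n, γ (n + 1) - γ n = C)
    (m : ℕ) (α : ℕ → ℂ) (hα : ∀ j ∈ Icc 1 m, ‖α j‖ < 1)
    (F G : ℂ → ℂ) (f g : ℕ → ℂ) (K : ℕ → ℕ → ℂ)
    (hf : IsCoeffs f F) (hg : IsCoeffs g G)
    (hfac : ∀ z : ℂ, ‖z‖ < 1 →
      F z = (∏ j ∈ Icc 1 m, (z - α j) / (1 - (starRingEnd ℂ) (α j) * z)) * G z)
    -- `K j` are the Taylor coefficients of `G(z)/(1-ᾱ_j z)`
    (hK : ∀ j ∈ Icc 1 m, ∀ z : ℂ, ‖z‖ < 1 →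
      HasSum (fun n => K j n * z ^ n) (G z / (1 - (starRingEnd ℂ) (α j) * z)))
    (hH2 : Summable fun n => ‖f n‖ ^ 2)
    (hX : Summable fun n => γ n * ‖f n‖ ^ 2) :
    (∀ j ∈ Icc 1 m, Summable fun n => (γ (n + 1) - γ n) * ‖K j n‖ ^ 2) ∧
      xnorm2 γ g =
        xnorm2 γ f - ∑ j ∈ Icc 1 m, (1 - ‖α j‖ ^ 2) * ynorm2 γ (K j) := by
  have hf_eq : f = taylorCoeff fun z => (∏ j ∈ Icc 1 m, blaschke (α j) z) * G z :=
    (hf.congr hfac).eq_taylorCoeff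
  have hK_eq : ∀ j ∈ Icc 1 m, K j = taylorCoeff fun z => G z / (1 - conj (α j) * z) :=
    fun j hj => IsCoeffs.eq_taylorCoeff (hK j hj)
  subst hf_eq
  obtain ⟨hKs, -, heq⟩ := xnorm2_taylorCoeff_of_prod_blaschke_mul (Icc 1 m) hα
    hg.differentiableOn hmono h0.ge hdiff hH2 hX
  refine ⟨fun j hj => ?_, ?_⟩
  · simpa only [hK_eq j hj, hdiff] using (hKs j hj).mul_left C
  · rw [hg.eq_taylorCoeff, heq]
    exact congrArg _ (sum_congr rfl fun j hj => by rw [hK_eq j hj])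

/-- Corollary 1: if `γ_{n+1}-γ_n ≡ C > 0` and `F ∈ X_γ` has finitely many zeros in `𝔻`
with Blaschke decomposition `F = B·G`, then
`‖G‖_{X_γ}² = ‖F‖_{X_γ}² − Σ_j (1-|α_j|²)‖G/(1-ᾱ_j·)‖_{Y_γ}²`. -/
theorem stmt5 (γ : ℕ → ℝ) (hmono : Monotone γ) (h0 : γ 0 = 0)
    (C : ℝ) (hC : 0 < C) (hdiff : ∀ n, γ (n + 1) - γ n = C)
    (m : ℕ) (α : ℕ → ℂ) (hα : ∀ j ∈ Icc 1 m, ‖α j‖ < 1)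
    (F G : ℂ → ℂ) (f g : ℕ → ℂ) (K : ℕ → ℕ → ℂ)
    (hf : IsCoeffs f F) (hg : IsCoeffs g G)
    (hG0 : ∀ z : ℂ, ‖z‖ < 1 → G z ≠ 0)
    (hfac : ∀ z : ℂ, ‖z‖ < 1 →
      F z = (∏ j ∈ Icc 1 m, (z - α j) / (1 - (starRingEnd ℂ) (α j) * z)) * G z)
    -- `K j` are the Taylor coefficients of `G(z)/(1-ᾱ_j z)`
    (hK : ∀ j ∈ Icc 1 m, ∀ z : ℂ, ‖z‖ < 1 →
      HasSum (fun n => K j n * z ^ n) (G z / (1 - (starRingEnd ℂ) (α j) * z)))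
    (hH2 : Summable fun n => ‖f n‖ ^ 2)
    (hX : Summable fun n => γ n * ‖f n‖ ^ 2) :
    (∀ j ∈ Icc 1 m, Summable fun n => (γ (n + 1) - γ n) * ‖K j n‖ ^ 2) ∧
      xnorm2 γ g =
        xnorm2 γ f - ∑ j ∈ Icc 1 m, (1 - ‖α j‖ ^ 2) * ynorm2 γ (K j) :=
  stmt5_general γ hmono h0 C hdiff m α hα F G f g K hf hg hfac hK hH2 hX
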